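/- arXiv:1812.07365 — 4 statements merged into one kernel-verified Lean document; each statement's English description precedes it below -/
import Mathlib

section
/- Let μ be a critical offspring distribution with finite variance σ² > 0, and let B ⊂ ℤ₊ with 0 < μ(B) < 1. Let σ_B² and σ_{B^c}² denote the variances of the probability measures p_B and p_{B^c} respectively, and let γ_B² = μ(B)(1−μ(B)) − (1/σ²)(Σ_{i∈B}(i−1)μ(i))². Then μ(B)·σ_B² + (1−μ(B))·σ_{B^c}² = (σ²/(μ(B)(1−μ(B))))·γ_B². -/
lemma my_sum_ite (f : ℕ → ℝ) (hf : Summable f) (p : ℕ → Prop) [DecidablePred p] :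
    Summable (fun i => if p i then f i else 0) :=
  (hf.indicator {i | p i}).congr (fun i => by simp [Set.indicator_apply, Set.mem_setOf_eq])

lemma my_split (f : ℕ → ℝ) (hf : Summable f) (B : Set ℕ) [DecidablePred (· ∈ B)] :
    (∑' i, if i ∈ B then f i else 0) + (∑' i, if i ∉ B then f i else 0) = ∑' i, f i := by
  rw [← Summable.tsum_add (my_sum_ite f hf _) (my_sum_ite f hf _)]
  exact tsum_congr fun i => by by_cases h : i ∈ B <;> simp [h]

lemma my_expand (μ : ℕ → ℝ) (p : ℕ → Prop) [DecidablePred p]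
    (h2 : Summable fun i => if p i then ((i : ℝ) - 1) ^ 2 * μ i else 0)
    (h1 : Summable fun i => if p i then ((i : ℝ) - 1) * μ i else 0)
    (h0 : Summable fun i => if p i then μ i else 0) (m : ℝ) :
    (∑' i, if p i then (((i : ℝ) - 1) - m) ^ 2 * μ i else 0)
      = (∑' i, if p i then ((i : ℝ) - 1) ^ 2 * μ i else 0)
        - 2 * m * (∑' i, if p i then ((i : ℝ) - 1) * μ i else 0)
        + m ^ 2 * (∑' i, if p i then μ i else 0) := by
  have e : ∀ i, (if p i then (((i : ℝ) - 1) - m) ^ 2 * μ i else 0)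
      = (if p i then ((i : ℝ) - 1) ^ 2 * μ i else 0)
        - 2 * m * (if p i then ((i : ℝ) - 1) * μ i else 0)
        + m ^ 2 * (if p i then μ i else 0) := fun i => by
    by_cases h : p i <;> simp [h] <;> ring
  rw [tsum_congr e, Summable.tsum_add (Summable.sub h2 (by exact (h1.mul_left _))) (h0.mul_left _),
    Summable.tsum_sub h2 (h1.mul_left _), tsum_mul_left, tsum_mul_left]
/-- Let `μ` be a critical offspring distribution with finite variance
`σ² > 0` and `B ⊆ ℕ` with `0 < μ(B) < 1`. Let `σ_B²`, `σ_{Bᶜ}²` be the variances of the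
laws `p_B`, `p_{Bᶜ}` (where `p_C(i) = μ(i+1)/μ(C)` for `i+1 ∈ C`, i.e. the law of `X − 1`
given `X ∈ C` for `X ∼ μ`), and `γ_B² = μ(B)(1−μ(B)) − (1/σ²)(Σ_{i∈B}(i−1)μ(i))²`. Then
`μ(B) σ_B² + (1−μ(B)) σ_{Bᶜ}² = (σ²/(μ(B)(1−μ(B)))) γ_B²`. -/
theorem stmt_3 (μ : ℕ → ℝ) (hnonneg : ∀ i, 0 ≤ μ i)
    (hsummable : Summable μ) (htotal : ∑' i, μ i = 1)
    (hmean_summable : Summable fun i : ℕ => (i : ℝ) * μ i)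
    (hcritical : ∑' i : ℕ, (i : ℝ) * μ i = 1)
    (hvar_summable : Summable fun i : ℕ => ((i : ℝ) - 1) ^ 2 * μ i)
    (σ2 : ℝ) (hσ2 : σ2 = ∑' i : ℕ, ((i : ℝ) - 1) ^ 2 * μ i) (hσ2_pos : 0 < σ2)
    (B : Set ℕ) [DecidablePred (· ∈ B)]
    (μB : ℝ) (hμB : μB = ∑' i, if i ∈ B then μ i else 0)
    (hμB_pos : 0 < μB) (hμB_lt : μB < 1)
    (mB mBc : ℝ)
    (hmB : mB = (1 / μB) * ∑' i, if i ∈ B then ((i : ℝ) - 1) * μ i else 0)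
    (hmBc : mBc = (1 / (1 - μB)) * ∑' i, if i ∉ B then ((i : ℝ) - 1) * μ i else 0)
    (σB2 σBc2 : ℝ)
    (hσB2 : σB2 = (1 / μB) * ∑' i, if i ∈ B then (((i : ℝ) - 1) - mB) ^ 2 * μ i else 0)
    (hσBc2 : σBc2 = (1 / (1 - μB)) * ∑' i, if i ∉ B then (((i : ℝ) - 1) - mBc) ^ 2 * μ i else 0)
    (γB2 : ℝ)
    (hγB2 : γB2 = μB * (1 - μB)
        - (1 / σ2) * (∑' i, if i ∈ B then ((i : ℝ) - 1) * μ i else 0) ^ 2) :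
    μB * σB2 + (1 - μB) * σBc2 = (σ2 / (μB * (1 - μB))) * γB2 := by
  have hμB' : μB ≠ 0 := ne_of_gt hμB_pos
  have h1μB : (1 : ℝ) - μB ≠ 0 := by linarith
  have hσ2' : σ2 ≠ 0 := ne_of_gt hσ2_pos
  have hsub : Summable (fun i : ℕ => ((i : ℝ) - 1) * μ i) :=
    (hmean_summable.sub hsummable).congr (fun i => by ring)
  have hmean0 : ∑' i : ℕ, ((i : ℝ) - 1) * μ i = 0 := by
    calc ∑' i : ℕ, ((i : ℝ) - 1) * μ i = ∑' i : ℕ, ((i : ℝ) * μ i - μ i) :=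
          tsum_congr (fun i => by ring)
      _ = 1 - 1 := by rw [Summable.tsum_sub hmean_summable hsummable, hcritical, htotal]
      _ = 0 := by ring
  -- summabilities
  have s0B := my_sum_ite μ hsummable (· ∈ B)
  have s0Bc := my_sum_ite μ hsummable (· ∉ B)
  have s1B := my_sum_ite _ hsub (· ∈ B)
  have s1Bc := my_sum_ite _ hsub (· ∉ B)
  have s2B := my_sum_ite _ hvar_summable (· ∈ B)
  have s2Bc := my_sum_ite _ hvar_summable (· ∉ B)
  -- splits
  have split0 := my_split μ hsummable B
  have split1 := my_split _ hsub B
  have split2 := my_split _ hvar_summable B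
  rw [htotal] at split0
  rw [hmean0] at split1
  rw [← hσ2] at split2
  set S := ∑' i, if i ∈ B then ((i : ℝ) - 1) * μ i else 0 with hSdef
  set Q := ∑' i, if i ∈ B then ((i : ℝ) - 1) ^ 2 * μ i else 0 with hQdef
  have hSc : (∑' i, if i ∉ B then ((i : ℝ) - 1) * μ i else 0) = -S := by linarith
  have hQc : (∑' i, if i ∉ B then ((i : ℝ) - 1) ^ 2 * μ i else 0) = σ2 - Q := by linarith
  have hBc : (∑' i, if i ∉ B then μ i else 0) = 1 - μB := by rw [hμB]; linarith
  have eB := my_expand μ (· ∈ B) s2B s1B s0B mB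
  have eBc := my_expand μ (· ∉ B) s2Bc s1Bc s0Bc mBc
  rw [← hμB] at eB
  rw [hSc, hQc, hBc] at eBc
  rw [hSc] at hmBc
  rw [hσB2, hσBc2, eB, eBc, hγB2, hmB, hmBc]
  field_simp
  ring
end

section
/- Let μ be a critical offspring distribution with finite variance σ² > 0 whose support contains at least 3 values, and let B ⊂ ℤ₊ with 0 < μ(B) < 1. Then γ_B² = μ(B)(1−μ(B)) − (1/σ²)(Σ_{i∈B}(i−1)μ(i))² is strictly positive. -/
lemma pair_eq_zero (x y : ℕ) (hxy : x ≠ y) (μB t v : ℝ)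
    (hx : v - μB - t * ((x : ℝ) - 1) = 0) (hy : v - μB - t * ((y : ℝ) - 1) = 0) :
    t = 0 := by
  have h : t * ((x : ℝ) - (y : ℝ)) = 0 := by ring_nf; ring_nf at hx hy; linarith
  rcases mul_eq_zero.mp h with h | h
  · exact h
  · exact absurd (by exact_mod_cast sub_eq_zero.mp h) hxy

/-- Let `μ` be a critical offspring distribution with finite variance
`σ² > 0` whose support contains at least 3 values, and `B ⊆ ℕ` with `0 < μ(B) < 1`. Then
`γ_B² = μ(B)(1−μ(B)) − (1/σ²)(Σ_{i∈B}(i−1)μ(i))²` is strictly positive. -/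
theorem stmt_4 (μ : ℕ → ℝ) (hnonneg : ∀ i, 0 ≤ μ i)
    (hsummable : Summable μ) (htotal : ∑' i, μ i = 1)
    (hmean_summable : Summable fun i : ℕ => (i : ℝ) * μ i)
    (hcritical : ∑' i : ℕ, (i : ℝ) * μ i = 1)
    (hvar_summable : Summable fun i : ℕ => ((i : ℝ) - 1) ^ 2 * μ i)
    (σ2 : ℝ) (hσ2 : σ2 = ∑' i : ℕ, ((i : ℝ) - 1) ^ 2 * μ i) (hσ2_pos : 0 < σ2)
    (hsupp : ∃ a b c : ℕ, a ≠ b ∧ b ≠ c ∧ a ≠ c ∧ 0 < μ a ∧ 0 < μ b ∧ 0 < μ c)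
    (B : Set ℕ) [DecidablePred (· ∈ B)]
    (μB : ℝ) (hμB : μB = ∑' i, if i ∈ B then μ i else 0)
    (hμB_pos : 0 < μB) (hμB_lt : μB < 1) :
    0 < μB * (1 - μB) - (1 / σ2) * (∑' i, if i ∈ B then ((i : ℝ) - 1) * μ i else 0) ^ 2 := by
  obtain ⟨a, b, c, hab, hbc, hac, hma, hmb, hmc⟩ := hsupp
  set S : ℝ := ∑' i, if i ∈ B then ((i : ℝ) - 1) * μ i else 0 with hS
  set t : ℝ := S / σ2 with ht
  set ind : ℕ → ℝ := fun i => if i ∈ B then (1 : ℝ) else 0 with hind_def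
  set f : ℕ → ℝ := fun i => ind i - μB - t * ((i : ℝ) - 1) with hf
  -- summability facts
  have hsub : Summable fun i : ℕ => ((i : ℝ) - 1) * μ i := by
    have := hmean_summable.sub hsummable
    apply this.congr
    intro i; ring
  have habs : Summable fun i : ℕ => |(i : ℝ) - 1| * μ i := by
    apply Summable.of_nonneg_of_le (fun i => mul_nonneg (abs_nonneg _) (hnonneg i)) (fun i => ?_)
      (hvar_summable.add hsummable)
    have h1 := hnonneg i
    have h2 : |(i : ℝ) - 1| ≤ ((i : ℝ) - 1) ^ 2 + 1 := by
      nlinarith [sq_abs ((i : ℝ) - 1), abs_nonneg ((i : ℝ) - 1)]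
    calc |(i : ℝ) - 1| * μ i ≤ (((i : ℝ) - 1) ^ 2 + 1) * μ i := by
          exact mul_le_mul_of_nonneg_right h2 h1
      _ = ((i : ℝ) - 1) ^ 2 * μ i + μ i := by ring
  have hindμ : Summable fun i => ind i * μ i := by
    apply Summable.of_nonneg_of_le (fun i => ?_) (fun i => ?_) hsummable
    · simp only [hind_def]; split_ifs <;> simp [hnonneg i]
    · simp only [hind_def]; split_ifs <;> simp [hnonneg i]
  have hindm : Summable fun i => ind i * (((i : ℝ) - 1) * μ i) := by
    apply Summable.of_abs
    apply Summable.of_nonneg_of_le (fun i => abs_nonneg _) (fun i => ?_) habs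
    rw [abs_mul, abs_mul, abs_of_nonneg (hnonneg i)]
    have h1 : |ind i| ≤ 1 := by simp only [hind_def]; split_ifs <;> simp
    exact mul_le_of_le_one_left (mul_nonneg (abs_nonneg _) (hnonneg i)) h1
  -- tsum values
  have T0 : ∑' i, ind i * μ i = μB := by
    rw [hμB]; apply tsum_congr; intro i
    simp only [hind_def]; split_ifs <;> simp
  have T1 : ∑' i, ind i * (((i : ℝ) - 1) * μ i) = S := by
    rw [hS]; apply tsum_congr; intro i
    simp only [hind_def]; split_ifs <;> simp
  have Tm : ∑' i : ℕ, ((i : ℝ) - 1) * μ i = 0 := by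
    have h := Summable.tsum_sub hmean_summable hsummable
    rw [hcritical, htotal] at h
    calc ∑' i : ℕ, ((i : ℝ) - 1) * μ i = ∑' i : ℕ, ((i : ℝ) * μ i - μ i) :=
          tsum_congr fun i => by ring
      _ = 1 - 1 := h
      _ = 0 := by ring
  have Tv : ∑' i : ℕ, ((i : ℝ) - 1) ^ 2 * μ i = σ2 := hσ2.symm
  -- pointwise expansion
  have heq : ∀ i, f i ^ 2 * μ i =
      (1 - 2 * μB) * (ind i * μ i) + μB ^ 2 * μ i
        - 2 * t * (ind i * (((i : ℝ) - 1) * μ i)) + 2 * t * μB * (((i : ℝ) - 1) * μ i)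
        + t ^ 2 * (((i : ℝ) - 1) ^ 2 * μ i) := by
    intro i
    simp only [hf, hind_def]
    split_ifs <;> ring
  -- summabilities of the pieces
  have sA := hindμ.mul_left (1 - 2 * μB)
  have sB := hsummable.mul_left (μB ^ 2)
  have sC := hindm.mul_left (2 * t)
  have sD := hsub.mul_left (2 * t * μB)
  have sE := hvar_summable.mul_left (t ^ 2)
  have sh : Summable fun i => f i ^ 2 * μ i := by
    apply ((((sA.add sB).sub sC).add sD).add sE).congr
    intro i; rw [heq i]
  -- value of the tsum
  have sum_h : ∑' i, f i ^ 2 * μ i = μB * (1 - μB) - S ^ 2 / σ2 := by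
    calc ∑' i, f i ^ 2 * μ i
        = ∑' i, ((1 - 2 * μB) * (ind i * μ i) + μB ^ 2 * μ i
            - 2 * t * (ind i * (((i : ℝ) - 1) * μ i)) + 2 * t * μB * (((i : ℝ) - 1) * μ i)
            + t ^ 2 * (((i : ℝ) - 1) ^ 2 * μ i)) := tsum_congr heq
      _ = (1 - 2 * μB) * μB + μB ^ 2 * 1 - 2 * t * S + 2 * t * μB * 0 + t ^ 2 * σ2 := by
          rw [Summable.tsum_add (((sA.add sB).sub sC).add sD) sE,
            Summable.tsum_add ((sA.add sB).sub sC) sD,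
            Summable.tsum_sub (sA.add sB) sC, Summable.tsum_add sA sB,
            tsum_mul_left, tsum_mul_left, tsum_mul_left, tsum_mul_left, tsum_mul_left,
            T0, T1, Tm, Tv, htotal]
      _ = μB * (1 - μB) - S ^ 2 / σ2 := by
          rw [ht]; field_simp; ring
  -- there is a point with positive contribution
  have hex : ∃ i, 0 < μ i ∧ f i ≠ 0 := by
    by_contra hcon
    push_neg at hcon
    have fa := hcon a hma
    have fb := hcon b hmb
    have fc := hcon c hmc
    simp only [hf, hind_def] at fa fb fc
    have contra : t = 0 ∧ ∃ v : ℝ, (v = 0 ∨ v = 1) ∧ v - μB - t * ((a : ℝ) - 1) = 0 := by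
      split_ifs at fa fb fc with h1 h2 h3
      · exact ⟨pair_eq_zero a b hab μB t 1 fa fb, 1, Or.inr rfl, fa⟩
      · exact ⟨pair_eq_zero a b hab μB t 1 fa fb, 1, Or.inr rfl, fa⟩
      · exact ⟨pair_eq_zero a c hac μB t 1 fa fc, 1, Or.inr rfl, fa⟩
      · exact ⟨pair_eq_zero b c hbc μB t 0 fb fc, 1, Or.inr rfl, fa⟩
      · exact ⟨pair_eq_zero b c hbc μB t 1 fb fc, 0, Or.inl rfl, fa⟩
      · exact ⟨pair_eq_zero a c hac μB t 0 fa fc, 0, Or.inl rfl, fa⟩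
      · exact ⟨pair_eq_zero a b hab μB t 0 fa fb, 0, Or.inl rfl, fa⟩
      · exact ⟨pair_eq_zero a b hab μB t 0 fa fb, 0, Or.inl rfl, fa⟩
    obtain ⟨ht0, v, hv, hveq⟩ := contra
    rw [ht0] at hveq
    rcases hv with rfl | rfl <;> [linarith; linarith]
  obtain ⟨i₀, hμi₀, hfi₀⟩ := hex
  have hpos : 0 < ∑' i, f i ^ 2 * μ i := by
    apply Summable.tsum_pos sh (fun i => mul_nonneg (sq_nonneg _) (hnonneg i)) i₀
    exact mul_pos (pow_two_pos_of_ne_zero hfi₀) hμi₀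
  rw [sum_h] at hpos
  have : (1 / σ2) * S ^ 2 = S ^ 2 / σ2 := by ring
  linarith
end

section
/- Let (x_1, ..., x_n) be integers, each ≥ −1, with x_1 + ... + x_n = −1, and for 0 ≤ m ≤ n define the partial sums S_m = x_1 + ... + x_m of the cyclically shifted sequence. Then among the n cyclic shifts of (x_1,...,x_n), exactly one has all partial sums S_0, S_1, ..., S_{n−1} nonnegative. -/
/-- **Cyclic lemma.** Let `(x_1, …, x_n)` be integers, each `≥ −1`, with
sum `−1`. Among the `n` cyclic shifts of the sequence, exactly one has all its partial
sums `S_0, …, S_{n−1}` nonnegative. (The shift by `r` reads the entries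
`x_{r+1}, x_{r+2}, …` cyclically; indices here are `0`-based, read modulo `n`.) -/
theorem stmt_8 (n : ℕ) (hn : 1 ≤ n) (x : ℕ → ℤ)
    (hbound : ∀ i < n, -1 ≤ x i)
    (hsum : ∑ i ∈ Finset.range n, x i = -1) :
    ∃! r : Fin n, ∀ m < n,
      0 ≤ ∑ j ∈ Finset.range m, x (((r : ℕ) + j) % n) := by
  classical
  set f : ℕ → ℤ := fun k => ∑ i ∈ Finset.range k, x (i % n) with hf
  have hstep : ∀ k, f (k + 1) = f k + x (k % n) := by
    intro k; simp [hf, Finset.sum_range_succ]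
  have hshift : ∀ r m : ℕ, ∑ j ∈ Finset.range m, x ((r + j) % n) = f (r + m) - f r := by
    intro r m
    induction m with
    | zero => simp
    | succ m ih =>
      rw [Finset.sum_range_succ, ih, ← add_assoc, hstep (r + m)]
      ring
  have hper : ∀ k, f (k + n) = f k - 1 := by
    intro k
    induction k with
    | zero =>
      have : f n = ∑ i ∈ Finset.range n, x i := by
        apply Finset.sum_congr rfl
        intro i hi
        rw [Nat.mod_eq_of_lt (Finset.mem_range.mp hi)]
      rw [zero_add, this, hsum]
      simp [hf]
    | succ k ih =>
      have h1 : k + 1 + n = (k + n) + 1 := by omega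
      rw [h1, hstep (k + n), hstep k, ih, Nat.add_mod_right]
      ring
  -- pick the least argmin of f on [0, n)
  obtain ⟨r0, hr0mem, hr0min⟩ :=
    Finset.exists_min_image (Finset.range n) f ⟨0, Finset.mem_range.mpr (by omega)⟩
  have hP : ∃ k, k < n ∧ f k ≤ f r0 := ⟨r0, Finset.mem_range.mp hr0mem, le_refl _⟩
  set r : ℕ := Nat.find hP with hrdef
  obtain ⟨hrn, hrle⟩ : r < n ∧ f r ≤ f r0 := Nat.find_spec hP
  have hmin : ∀ k < n, f r ≤ f k := fun k hk =>
    le_trans hrle (hr0min k (Finset.mem_range.mpr hk))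
  have hstrict : ∀ k < r, f r < f k := by
    intro k hk
    have := Nat.find_min hP hk
    push_neg at this
    exact lt_of_le_of_lt hrle (this (by omega))
  refine ⟨⟨r, hrn⟩, ?_, ?_⟩
  · intro m hm
    simp only [Fin.val_mk]
    rw [hshift, sub_nonneg]
    by_cases h : r + m < n
    · exact hmin _ h
    · have hk : r + m - n < r := by omega
      have he : (r + m - n) + n = r + m := by omega
      have := hper (r + m - n)
      rw [he] at this
      have h2 := hstrict _ hk
      omega
  · intro r' hgood
    set s : ℕ := (r' : ℕ) with hsdef
    have hs : s < n := r'.isLt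
    have hgood' : ∀ m < n, f s ≤ f (s + m) := by
      intro m hm
      have := hgood m hm
      rw [hshift, sub_nonneg] at this
      exact this
    have hi : ∀ k, s ≤ k → k < n → f s ≤ f k := by
      intro k h1 h2
      have := hgood' (k - s) (by omega)
      rwa [show s + (k - s) = k by omega] at this
    have hii : ∀ k < s, f s < f k := by
      intro k hk
      have hm : k + n - s < n := by omega
      have := hgood' (k + n - s) hm
      rw [show s + (k + n - s) = k + n by omega, hper k] at this
      omega
    have hsmin : ∀ k < n, f s ≤ f k := by
      intro k hk
      rcases lt_or_ge k s with h | h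
      · exact le_of_lt (hii k h)
      · exact hi k h hk
    have heq : f s = f r := le_antisymm (hsmin r hrn) (hmin s hs)
    have : s = r := by
      rcases lt_trichotomy s r with h | h | h
      · exact absurd heq (ne_of_gt (hstrict s h))
      · exact h
      · exact absurd heq (ne_of_lt (hii r h))
    exact Fin.ext this
end

section
/- Let μ be critical with finite variance σ² > 0, let B = {0}, and let A = {r} for some r ≥ 1. Then the limiting variance in the central limit theorem for the number of outdegree-r vertices in a μ-Galton–Watson tree conditioned to have n leaves satisfies δ² = (μ_r/μ_0)(1 + μ_r/μ_0) − r²μ_r²/(μ_0 σ²), and this quantity is nonnegative. -/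
/-- Let `μ` be critical with finite variance `σ² > 0`, `μ₀ = μ(0) > 0`,
and let `r ≥ 1`. The limiting variance in the CLT for the number of outdegree-`r` vertices
in a `μ`-Galton–Watson tree conditioned on its number of leaves,
`δ² = (μ_r/μ₀)(1 + μ_r/μ₀) − r² μ_r² / (μ₀ σ²)`, is nonnegative. -/
theorem stmt_16 (μ : ℕ → ℝ) (hnonneg : ∀ i, 0 ≤ μ i)
    (hsummable : Summable μ) (htotal : ∑' i, μ i = 1)
    (hmean_summable : Summable fun i : ℕ => (i : ℝ) * μ i)
    (hcritical : ∑' i : ℕ, (i : ℝ) * μ i = 1)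
    (hvar_summable : Summable fun i : ℕ => ((i : ℝ) - 1) ^ 2 * μ i)
    (σ2 : ℝ) (hσ2 : σ2 = ∑' i : ℕ, ((i : ℝ) - 1) ^ 2 * μ i) (hσ2_pos : 0 < σ2)
    (hμ0 : 0 < μ 0) (r : ℕ) (hr : 1 ≤ r) :
    0 ≤ (μ r / μ 0) * (1 + μ r / μ 0) - (r : ℝ) ^ 2 * (μ r) ^ 2 / (μ 0 * σ2) := by
  have h0r : (0 : ℕ) ≠ r := by omega
  have hkey : μ 0 + ((r : ℝ) - 1) ^ 2 * μ r ≤ σ2 := by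
    have h := Summable.sum_le_tsum ({0, r} : Finset ℕ)
      (fun i _ => mul_nonneg (sq_nonneg ((i : ℝ) - 1)) (hnonneg i)) hvar_summable
    rw [Finset.sum_pair h0r] at h
    rw [hσ2]
    refine le_trans (le_of_eq ?_) h
    push_cast
    ring
  have hμr := hnonneg r
  have hr1 : (1:ℝ) ≤ (r:ℝ) := by exact_mod_cast hr
  have e : μ r / μ 0 * (1 + μ r / μ 0) - (r : ℝ) ^ 2 * (μ r) ^ 2 / (μ 0 * σ2)
      = (μ r * σ2 * (μ 0 + μ r) - (r : ℝ) ^ 2 * μ r ^ 2 * μ 0) / (μ 0 ^ 2 * σ2) := by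
    field_simp
  rw [e]
  apply div_nonneg _ (by positivity)
  have hsq : (0:ℝ) ≤ (μ 0 - ((r:ℝ) - 1) * μ r) ^ 2 := sq_nonneg _
  nlinarith [mul_nonneg hμr hsq,
    mul_nonneg (mul_nonneg hμr (add_nonneg hμ0.le hμr)) (sub_nonneg.mpr hkey)]
end
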